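/- Let η ∈ W* with η_P ≠ 0, suppose there exists a Hamiltonian n-frame for η, fix one such frame (X₁,…,Xₙ), set z_i := pr_Q X_i (linearly independent vectors of Q), z := z₁ ∧ ⋯ ∧ zₙ, and let T_zD := span{ z₁ ∧ ⋯ ∧ z_{i−1} ∧ v ∧ z_{i+1} ∧ ⋯ ∧ zₙ : 1 ≤ i ≤ n, v ∈ Q } ⊆ ⋀ⁿQ. Define the generalized pseudofiber direction L^η := { ξ ∈ W : Ω(X'₁,…,X'_{i−1}, Y, X'_{i+1},…,X'ₙ, ξ) = 0 for every Hamiltonian n-frame (X'₁,…,X'ₙ) for η, every index 1 ≤ i ≤ n, and every Y ∈ W }. Then L^η = { (0, π) : π ∈ P, π vanishes identically on T_zD }. -/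

import Mathlib

open ExteriorAlgebra

set_option synthInstance.maxHeartbeats 1000000
set_option maxHeartbeats 1000000

/-- The wedge `v₁ ∧ ⋯ ∧ vₙ` of `n` vectors, as an element of the `n`-th exterior power. -/
noncomputable def wedge {Q : Type*} [AddCommGroup Q] [Module ℝ Q] (n : ℕ) (v : Fin n → Q) :
    ⋀[ℝ]^n Q :=
  ⟨ExteriorAlgebra.ιMulti ℝ n v, ExteriorAlgebra.ιMulti_range ℝ n ⟨v, rfl⟩⟩

/-- The phase space `W = Q × P` with `Q = ℝ^(n+k)` and `P = (⋀ⁿQ)*`. -/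
abbrev phaseSpace (n k : ℕ) :=
  (Fin (n + k) → ℝ) × Module.Dual ℝ (⋀[ℝ]^n (Fin (n + k) → ℝ))

/-- The canonical multisymplectic form
`Ω(w₁,…,w_{n+1}) = Σᵢ (−1)^(i−1) πᵢ(ξ₁ ∧ ⋯ ∧ ξ̂ᵢ ∧ ⋯ ∧ ξ_{n+1})` on `W = Q × P`,
where `w_j = (ξ_j, π_j)`. -/
noncomputable def multisymp (n k : ℕ) (w : Fin (n + 1) → phaseSpace n k) : ℝ :=
  ∑ i : Fin (n + 1), (-1 : ℝ) ^ (i : ℕ) *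
    (w i).2 (wedge n (fun j => (w (i.succAbove j)).1))

/-- A Hamiltonian `n`-frame for a linear form `η` on `W`: an `n`-tuple `X` of vectors of `W`
with `X₁ ∧ ⋯ ∧ Xₙ ≠ 0` satisfying the Hamilton equation `Ω(X₁,…,Xₙ,Y) = (−1)ⁿ η(Y)`. -/
noncomputable def IsHamFrame (n k : ℕ) (η : Module.Dual ℝ (phaseSpace n k))
    (X : Fin n → phaseSpace n k) : Prop :=
  ExteriorAlgebra.ιMulti ℝ n X ≠ 0 ∧
    ∀ Y : phaseSpace n k,
      multisymp n k (Fin.snoc X Y : Fin (n + 1) → phaseSpace n k) = (-1 : ℝ) ^ n * η Y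


variable {V : Type*} [AddCommGroup V] [Module ℝ V]

/-!
Testing the Hamilton equation against vertical vectors `(0, ρ)` gives `ρ(x₁ ∧ ⋯ ∧ xₙ) = η(0, ρ)`
for the `Q`-components `xⱼ` of any Hamiltonian frame, so all frames have the same wedge
`z₁ ∧ ⋯ ∧ zₙ`, nonzero since `η_P ≠ 0`; in particular every `xⱼ` lies in `span z`.
If `ξ = (ζ, π)` is in `L^η`, putting `(0, ρ)` into slot `i` of the frame `X₀` leaves only
`±ρ(z₁ ∧ ⋯ ẑᵢ ⋯ ∧ zₙ ∧ ζ)`, so `ζ ∈ span {zⱼ | j ≠ i}` for every `i`, whence `ζ = 0`; putting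
`(v, 0)` into slot `i` shows that `π` kills the generators of `T_zD`. Conversely, for `ξ = (0, π)`
only `±π(x₁ ∧ ⋯ ∧ Yᵢ ∧ ⋯ ∧ xₙ)` survives, and expanding the `xⱼ ∈ span z` multilinearly puts
this `n`-vector in `T_zD`.
-/

theorem MultilinearMap.map_mem_of_forall_mem_span {R ι N : Type*} {M : ι → Type*}
    [CommSemiring R] [Fintype ι] [DecidableEq ι] [∀ i, AddCommMonoid (M i)]
    [∀ i, Module R (M i)] [AddCommMonoid N] [Module R N] (f : MultilinearMap R M N)
    {p : Submodule R N} {s : ∀ i, Set (M i)} (hs : ∀ y, (∀ i, y i ∈ s i) → f y ∈ p)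
    {x : ∀ i, M i} (hx : ∀ i, x i ∈ Submodule.span R (s i)) : f x ∈ p := by
  suffices ∀ t : Finset ι, ∀ x : ∀ i, M i, (∀ i ∈ t, x i ∈ Submodule.span R (s i)) →
      (∀ i ∉ t, x i ∈ s i) → f x ∈ p from
    this Finset.univ x (fun i _ => hx i) (by simp)
  intro t
  induction t using Finset.induction_on with
  | empty => exact fun x _ hxs => hs x fun i => hxs i (Finset.notMem_empty i)
  | insert a t ha ih =>
    intro x hspan hxs
    have key : ∀ u ∈ Submodule.span R (s a), f (Function.update x a u) ∈ p := by
      intro u hu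
      induction hu using Submodule.span_induction with
      | mem u hu =>
        refine ih _ (fun i hi => ?_) (fun i hi => ?_)
        · rw [Function.update_of_ne (ne_of_mem_of_not_mem hi ha)]
          exact hspan i (Finset.mem_insert_of_mem hi)
        · rcases eq_or_ne i a with rfl | hia
          · simpa using hu
          · rw [Function.update_of_ne hia]
            exact hxs i (by simp [hia, hi])
      | zero => simp
      | add u v _ _ hu hv => simpa only [f.map_update_add] using add_mem hu hv
      | smul c u _ hu => simpa only [f.map_update_smul] using p.smul_mem c hu
    simpa only [Function.update_eq_self] using key (x a) (hspan a (Finset.mem_insert_self a t))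

theorem LinearIndependent.eq_zero_of_forall_mem_span_image_compl {R ι M : Type*} [Ring R]
    [AddCommGroup M] [Module R M] [Nonempty ι] {v : ι → M} (hv : LinearIndependent R v) {x : M}
    (hx : ∀ i, x ∈ Submodule.span R (v '' {i}ᶜ)) : x = 0 := by
  obtain ⟨l, -, rfl⟩ :=
    (Finsupp.mem_span_image_iff_linearCombination R).1 (hx (Classical.arbitrary ι))
  suffices l = 0 by simp [this]
  ext i
  obtain ⟨l', hl', hl'l⟩ := (Finsupp.mem_span_image_iff_linearCombination R).1 (hx i)
  rw [← hv hl'l]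
  simpa using Finsupp.notMem_support_iff.1 fun h => hl' h rfl

theorem ExteriorAlgebra.ιMulti_snoc {R M : Type*} [CommRing R] [AddCommGroup M] [Module R M]
    {n : ℕ} (v : Fin n → M) (x : M) :
    ιMulti R (n + 1) (Fin.snoc v x) = ιMulti R n v * ι R x := by
  rw [ιMulti_apply, ιMulti_apply, List.ofFn_succ']
  simp [List.concat_eq_append]

namespace exteriorPower

section Field

variable {K V : Type*} [Field K] [AddCommGroup V] [Module K V] {n : ℕ}

theorem ιMulti_ne_zero_of_linearIndependent {v : Fin n → V} (hv : LinearIndependent K v) :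
    ιMulti K n v ≠ 0 := by
  have h := (ιMulti_family_linearIndependent_field n hv).ne_zero ⟨Finset.univ, by simp⟩
  have hid : Set.powersetCard.ofFinEmbEquiv.symm ⟨Finset.univ, by simp⟩ =
      RelEmbedding.refl (α := Fin n) (· ≤ ·) :=
    (Finset.orderEmbOfFin_unique' _ fun _ => Finset.mem_univ _).symm
  rwa [ιMulti_family, hid] at h

theorem mem_span_of_ιMulti_snoc_eq_zero {v : Fin n → V} (hv : LinearIndependent K v) {x : V}
    (h : ιMulti K (n + 1) (Fin.snoc v x) = 0) : x ∈ Submodule.span K (Set.range v) := by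
  by_contra hx
  exact ιMulti_ne_zero_of_linearIndependent (linearIndependent_finSnoc.2 ⟨hv, hx⟩) h

end Field

variable {R M : Type*} [CommRing R] [AddCommGroup M] [Module R M] {n : ℕ}

/-- The tangent space `T_zD` at `z₁ ∧ ⋯ ∧ zₙ` to the cone of decomposable `n`-vectors. -/
def decomposableTangent (z : Fin n → M) : Submodule R (⋀[R]^n M) :=
  Submodule.span R {w | ∃ (i : Fin n) (v : M), w = ιMulti R n (Function.update z i v)}

theorem ιMulti_update_mem_decomposableTangent (z : Fin n → M) (i : Fin n) (v : M) :
    ιMulti R n (Function.update z i v) ∈ decomposableTangent (R := R) z :=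
  Submodule.subset_span ⟨i, v, rfl⟩

theorem ιMulti_update_comp_perm_mem_decomposableTangent (z : Fin n → M)
    (σ : Equiv.Perm (Fin n)) (i : Fin n) (v : M) :
    ιMulti R n (Function.update (z ∘ σ) i v) ∈ decomposableTangent (R := R) z := by
  have h := (ιMulti R n).map_perm (Function.update z (σ i) v) σ
  rw [Function.update_comp_equiv, Equiv.symm_apply_apply] at h
  rw [h]
  exact Submodule.smul_of_tower_mem _ _ (ιMulti_update_mem_decomposableTangent z (σ i) v)

theorem ιMulti_update_comp_mem_decomposableTangent (z : Fin n → M) (g : Fin n → Fin n)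
    (i : Fin n) (v : M) :
    ιMulti R n (Function.update (z ∘ g) i v) ∈ decomposableTangent (R := R) z := by
  classical
  -- Redefining `g` at `i` (where it is overwritten anyway) by a value `c` it misses elsewhere,
  -- `g` becomes a permutation unless two entries off `i` coincide.
  obtain ⟨c, -, hc⟩ : ∃ c ∈ Finset.univ, c ∉ (Finset.univ.erase i).image g := by
    refine Finset.exists_mem_notMem_of_card_lt_card (Finset.card_image_le.trans_lt ?_)
    simp [Finset.card_erase_of_mem, i.pos]
  have hg : Function.update (z ∘ g) i v = Function.update (z ∘ Function.update g i c) i v := by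
    rw [Function.comp_update, Function.update_idem]
  rw [hg]
  by_cases hinj : Function.Injective (Function.update g i c)
  · exact ιMulti_update_comp_perm_mem_decomposableTangent z
      (Equiv.ofBijective _ hinj.bijective_of_finite) i v
  obtain ⟨a, b, hab, hne⟩ := Function.not_injective_iff.1 hinj
  have hc' : ∀ j, j ≠ i → Function.update g i c j ≠ c := fun j hj h =>
    hc (Finset.mem_image.2 ⟨j, by simp [hj], by rwa [Function.update_of_ne hj] at h⟩)
  have ha : a ≠ i := by rintro rfl; exact hc' b hne.symm (by rw [← hab, Function.update_self])
  have hb : b ≠ i := by rintro rfl; exact hc' a hne (by rw [hab, Function.update_self])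
  rw [(ιMulti R n).map_eq_zero_of_eq _ (i := a) (j := b)
    (by rw [Function.update_of_ne ha, Function.update_of_ne hb, Function.comp_apply, hab]; rfl)
    hne]
  exact zero_mem _

theorem ιMulti_mem_decomposableTangent {z x : Fin n → M} (i : Fin n)
    (hx : ∀ j, j ≠ i → x j ∈ Submodule.span R (Set.range z)) :
    ιMulti R n x ∈ decomposableTangent (R := R) z := by
  classical
  refine (ιMulti R n).toMultilinearMap.map_mem_of_forall_mem_span
    (s := fun j => if j = i then {x i} else Set.range z) (fun y hy => ?_) (fun j => ?_)
  · have hyz : ∀ j, ∃ l, j ≠ i → y j = z l := fun j => by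
      by_cases hj : j = i
      · exact ⟨j, fun h => (h hj).elim⟩
      · obtain ⟨l, hl⟩ : y j ∈ Set.range z := by simpa [hj] using hy j
        exact ⟨l, fun _ => hl.symm⟩
    choose g hg using hyz
    have hy' : y = Function.update (z ∘ g) i (x i) := funext fun j => by
      rcases eq_or_ne j i with rfl | hj
      · simpa using hy j
      · rw [Function.update_of_ne hj]
        exact hg j hj
    rw [hy']
    exact ιMulti_update_comp_mem_decomposableTangent z g i (x i)
  · split_ifs with hj
    · subst hj
      exact Submodule.subset_span rfl
    · exact hx j hj

end exteriorPower

theorem wedge_eq_ιMulti {V : Type*} [AddCommGroup V] [Module ℝ V] (n : ℕ) (v : Fin n → V) :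
    wedge n v = exteriorPower.ιMulti ℝ n v :=
  rfl

section PhaseSpace

variable {n k : ℕ}

/-- Every term of `Ω` but the one omitting the vertical vector `w t` wedges `(w t).1 = 0`. -/
theorem multisymp_eq_of_fst_eq_zero (w : Fin (n + 1) → phaseSpace n k) (t : Fin (n + 1))
    (ht : (w t).1 = 0) :
    multisymp n k w = (-1) ^ (t : ℕ) * (w t).2 (wedge n fun j => (w (t.succAbove j)).1) := by
  rw [multisymp, Finset.sum_eq_single t _ (by simp)]
  intro i _ hit
  obtain ⟨j, hj⟩ := Fin.exists_succAbove_eq (Ne.symm hit)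
  rw [wedge_eq_ιMulti, (exteriorPower.ιMulti ℝ n).map_coord_zero j (by simp [hj, ht]), map_zero,
    mul_zero]

theorem multisymp_snoc_vertical (X : Fin n → phaseSpace n k)
    (ρ : Module.Dual ℝ (⋀[ℝ]^n (Fin (n + k) → ℝ))) :
    multisymp n k (Fin.snoc X (0, ρ)) = (-1) ^ n * ρ (wedge n fun j => (X j).1) := by
  rw [multisymp_eq_of_fst_eq_zero _ (Fin.last n) (by simp)]
  simp

theorem multisymp_snoc_update_vertical (X : Fin (n + 1) → phaseSpace (n + 1) k) (i : Fin (n + 1))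
    (ρ : Module.Dual ℝ (⋀[ℝ]^(n + 1) (Fin (n + 1 + k) → ℝ))) (ξ : phaseSpace (n + 1) k) :
    multisymp (n + 1) k (Fin.snoc (Function.update X i (0, ρ)) ξ) =
      (-1) ^ (i : ℕ) * ρ (wedge (n + 1) (Fin.snoc (fun j => (X (i.succAbove j)).1) ξ.1)) := by
  rw [multisymp_eq_of_fst_eq_zero _ i.castSucc (by simp), Fin.val_castSucc, Fin.snoc_castSucc,
    Function.update_self]
  congr 3
  funext j
  induction j using Fin.lastCases with
  | last => simp
  | cast j => simp [Fin.succAbove_ne]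

variable {η : Module.Dual ℝ (phaseSpace n k)} {X X₀ : Fin n → phaseSpace n k}

theorem IsHamFrame.apply_wedge_fst (hX : IsHamFrame n k η X)
    (ρ : Module.Dual ℝ (⋀[ℝ]^n (Fin (n + k) → ℝ))) :
    ρ (wedge n fun j => (X j).1) = η (0, ρ) := by
  have h := hX.2 (0, ρ)
  rw [multisymp_snoc_vertical] at h
  exact mul_left_cancel₀ (pow_ne_zero _ (by norm_num)) h

theorem IsHamFrame.wedge_fst_eq (hX : IsHamFrame n k η X) (hX₀ : IsHamFrame n k η X₀) :
    wedge n (fun j => (X j).1) = wedge n (fun j => (X₀ j).1) := by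
  rw [← sub_eq_zero, ← Module.forall_dual_apply_eq_zero_iff ℝ]
  intro ρ
  rw [map_sub, hX.apply_wedge_fst, hX₀.apply_wedge_fst, sub_self]

theorem IsHamFrame.linearIndependent_fst (hX : IsHamFrame n k η X)
    (hη : ∃ π : Module.Dual ℝ (⋀[ℝ]^n (Fin (n + k) → ℝ)), η (0, π) ≠ 0) :
    LinearIndependent ℝ fun j => (X j).1 := by
  obtain ⟨π, hπ⟩ := hη
  by_contra hdep
  rw [← hX.apply_wedge_fst, wedge_eq_ιMulti,
    (exteriorPower.ιMulti ℝ n).map_linearDependent _ hdep, map_zero] at hπ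
  exact hπ rfl

/-- `z₁ ∧ ⋯ ∧ zₙ ∧ x_j = x₁ ∧ ⋯ ∧ xₙ ∧ x_j = 0`, so `x_j` lies in the span of the `zᵢ`. -/
theorem IsHamFrame.fst_mem_span (hX : IsHamFrame n k η X) (hX₀ : IsHamFrame n k η X₀)
    (hz : LinearIndependent ℝ fun j => (X₀ j).1) (j : Fin n) :
    (X j).1 ∈ Submodule.span ℝ (Set.range fun j => (X₀ j).1) := by
  refine exteriorPower.mem_span_of_ιMulti_snoc_eq_zero hz (Subtype.ext ?_)
  have hwedge := congrArg Subtype.val (hX.wedge_fst_eq hX₀)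
  simp only [wedge_eq_ιMulti, exteriorPower.ιMulti_apply_coe] at hwedge
  rw [exteriorPower.ιMulti_apply_coe, ExteriorAlgebra.ιMulti_snoc, ← hwedge,
    ← ExteriorAlgebra.ιMulti_snoc, ZeroMemClass.coe_zero]
  exact (ExteriorAlgebra.ιMulti ℝ (n + 1)).map_eq_zero_of_eq _ (i := j.castSucc) (j := Fin.last n)
    (by simp) (Fin.castSucc_lt_last j).ne

theorem fst_update_eq (X : Fin n → phaseSpace n k) (i : Fin n) (Y : phaseSpace n k) :
    (fun j => (Function.update X i Y j).1) = Function.update (fun j => (X j).1) i Y.1 :=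
  Function.comp_update Prod.fst X i Y

theorem multisymp_snoc_update_eq_zero (hX : IsHamFrame n k η X) (hX₀ : IsHamFrame n k η X₀)
    (hz : LinearIndependent ℝ fun j => (X₀ j).1) {π : Module.Dual ℝ (⋀[ℝ]^n (Fin (n + k) → ℝ))}
    (hπ : ∀ t ∈ exteriorPower.decomposableTangent (fun j => (X₀ j).1), π t = 0)
    (i : Fin n) (Y : phaseSpace n k) :
    multisymp n k (Fin.snoc (Function.update X i Y) (0, π)) = 0 := by
  rw [multisymp_snoc_vertical, fst_update_eq, wedge_eq_ιMulti]
  refine mul_eq_zero_of_right _ (hπ _ (exteriorPower.ιMulti_mem_decomposableTangent i ?_))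
  intro j hj
  rw [Function.update_of_ne hj]
  exact hX.fst_mem_span hX₀ hz j

theorem apply_eq_zero_of_forall_multisymp_update_eq_zero
    {π : Module.Dual ℝ (⋀[ℝ]^n (Fin (n + k) → ℝ))}
    (hπ : ∀ (i : Fin n) (v : Fin (n + k) → ℝ),
      multisymp n k (Fin.snoc (Function.update X₀ i (v, 0)) (0, π)) = 0) :
    ∀ t ∈ exteriorPower.decomposableTangent (fun j => (X₀ j).1), π t = 0 := by
  suffices exteriorPower.decomposableTangent (fun j => (X₀ j).1) ≤ LinearMap.ker π from
    fun t ht => this ht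
  refine Submodule.span_le.2 ?_
  rintro _ ⟨i, v, rfl⟩
  have h := hπ i v
  rw [multisymp_snoc_vertical, fst_update_eq] at h
  exact (mul_eq_zero.1 h).resolve_left (pow_ne_zero _ (by norm_num))

theorem fst_eq_zero_of_forall_multisymp_update_eq_zero {X₀ : Fin (n + 1) → phaseSpace (n + 1) k}
    (hz : LinearIndependent ℝ fun j => (X₀ j).1) {ξ : phaseSpace (n + 1) k}
    (hξ : ∀ (i : Fin (n + 1)) (ρ : Module.Dual ℝ (⋀[ℝ]^(n + 1) (Fin (n + 1 + k) → ℝ))),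
      multisymp (n + 1) k (Fin.snoc (Function.update X₀ i (0, ρ)) ξ) = 0) :
    ξ.1 = 0 := by
  refine hz.eq_zero_of_forall_mem_span_image_compl fun i => ?_
  have hwedge : wedge (n + 1) (Fin.snoc (fun j => (X₀ (i.succAbove j)).1) ξ.1) = 0 := by
    rw [← Module.forall_dual_apply_eq_zero_iff ℝ]
    intro ρ
    have h := hξ i ρ
    rw [multisymp_snoc_update_vertical] at h
    exact (mul_eq_zero.1 h).resolve_left (pow_ne_zero _ (by norm_num))
  rw [← Fin.range_succAbove, ← Set.range_comp]
  exact exteriorPower.mem_span_of_ιMulti_snoc_eq_zero (hz.comp _ Fin.succAbove_right_injective)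
    hwedge

end PhaseSpace

theorem statement11_general (n k : ℕ) (hn : 1 ≤ n)
    (η : Module.Dual ℝ (phaseSpace n k))
    (hηP : ∃ π : Module.Dual ℝ (⋀[ℝ]^n (Fin (n + k) → ℝ)), η (0, π) ≠ 0)
    (X₀ : Fin n → phaseSpace n k) (hX₀ : IsHamFrame n k η X₀)
    (z : Fin n → (Fin (n + k) → ℝ)) (hz : z = fun i => (X₀ i).1)
    (TzD : Submodule ℝ (⋀[ℝ]^n (Fin (n + k) → ℝ)))
    (hTzD : TzD = Submodule.span ℝ
      {w | ∃ (i : Fin n) (v : Fin (n + k) → ℝ), w = wedge n (Function.update z i v)}) :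
    LinearIndependent ℝ z ∧
      {ξ : phaseSpace n k | ∀ X : Fin n → phaseSpace n k, IsHamFrame n k η X →
          ∀ (i : Fin n) (Y : phaseSpace n k),
            multisymp n k
              (Fin.snoc (Function.update X i Y) ξ : Fin (n + 1) → phaseSpace n k) = 0} =
        {ξ : phaseSpace n k | ∃ π : Module.Dual ℝ (⋀[ℝ]^n (Fin (n + k) → ℝ)),
          (∀ t ∈ TzD, π t = 0) ∧ ξ = (0, π)} := by
  obtain ⟨n, rfl⟩ := Nat.exists_eq_add_of_le' hn
  subst hz hTzD
  have hind := hX₀.linearIndependent_fst hηP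
  refine ⟨hind, Set.ext fun ⟨ζ, π⟩ => ⟨fun hξ => ?_, ?_⟩⟩
  · obtain rfl : ζ = 0 :=
      fst_eq_zero_of_forall_multisymp_update_eq_zero hind fun i ρ => hξ X₀ hX₀ i (0, ρ)
    exact ⟨π, apply_eq_zero_of_forall_multisymp_update_eq_zero fun i v => hξ X₀ hX₀ i (v, 0), rfl⟩
  · rintro ⟨π, hπ, hξ⟩ X hX i Y
    rw [hξ]
    exact multisymp_snoc_update_eq_zero hX hX₀ hind hπ i Y

/-- Proposition 4.4 of the paper, pointwise: the generalized pseudofiber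
direction `L^η` coincides with the set of vertical vectors `(0,π)` with `π` annihilating
the tangent space `T_zD` at `z = pr_Q X₀₁ ∧ ⋯ ∧ pr_Q X₀ₙ` to the cone of decomposable
`n`-vectors of `Q`. -/
theorem statement11 (n k : ℕ) (hn : 1 ≤ n) (hk : 1 ≤ k)
    (η : Module.Dual ℝ (phaseSpace n k))
    (hηP : ∃ π : Module.Dual ℝ (⋀[ℝ]^n (Fin (n + k) → ℝ)), η (0, π) ≠ 0)
    (X₀ : Fin n → phaseSpace n k) (hX₀ : IsHamFrame n k η X₀)
    (z : Fin n → (Fin (n + k) → ℝ)) (hz : z = fun i => (X₀ i).1)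
    (TzD : Submodule ℝ (⋀[ℝ]^n (Fin (n + k) → ℝ)))
    (hTzD : TzD = Submodule.span ℝ
      {w | ∃ (i : Fin n) (v : Fin (n + k) → ℝ), w = wedge n (Function.update z i v)}) :
    LinearIndependent ℝ z ∧
      {ξ : phaseSpace n k | ∀ X : Fin n → phaseSpace n k, IsHamFrame n k η X →
          ∀ (i : Fin n) (Y : phaseSpace n k),
            multisymp n k
              (Fin.snoc (Function.update X i Y) ξ : Fin (n + 1) → phaseSpace n k) = 0} =
        {ξ : phaseSpace n k | ∃ π : Module.Dual ℝ (⋀[ℝ]^n (Fin (n + k) → ℝ)),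
          (∀ t ∈ TzD, π t = 0) ∧ ξ = (0, π)} :=
  statement11_general n k hn η hηP X₀ hX₀ z hz TzD hTzD
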